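/- arXiv:2112.11524 — 3 statements merged into one kernel-verified Lean document; each statement's English description precedes it below -/
import Mathlib

section
/- Let τ₁, …, τ_L be pairwise distinct nonzero real numbers and V the L×L matrix with entries V_{j,ℓ} = τ_ℓ^j (1 ≤ j, ℓ ≤ L). Then the inverse matrix V^{-1} = (v_{t,T}) satisfies v_{t,T} = (−1)^{T−1} (τ_t ∏_{ℓ ≤ L, ℓ ≠ t} (τ_ℓ − τ_t))^{-1} · e_{L−T}(τ₁, …, τ̂_t, …, τ_L), where e_{L−T} denotes the elementary symmetric polynomial of degree L−T in the L−1 variables τ_ℓ with ℓ ≠ t. -/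
open Finset

section aux
open Polynomial

private lemma stmt_1_key {ι : Type*} (s : Finset ι) (f : ι → ℝ) (x : ℝ) :
    ∑ k ∈ Finset.range (#s + 1),
      (-1 : ℝ) ^ k * (∑ t ∈ s.powersetCard (#s - k), ∏ i ∈ t, f i) * x ^ k
      = (-1 : ℝ) ^ (#s) * ∏ i ∈ s, (x - f i) := by
  have hP : (∏ i ∈ s, (X - C (f i))).eval x = ∏ i ∈ s, (x - f i) := by
    simp [eval_prod]
  have hdeg : (∏ i ∈ s, (X - C (f i))).natDegree = #s := by
    simpa using Polynomial.natDegree_prod_of_monic s _ (fun i _ => monic_X_sub_C (f i))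
  have hcoeff : ∀ k ≤ #s, (∏ i ∈ s, (X - C (f i))).coeff k
      = (-1 : ℝ) ^ (#s - k) * ∑ t ∈ s.powersetCard (#s - k), ∏ i ∈ t, f i := by
    intro k hk
    rw [show (∏ i ∈ s, (X - C (f i))) = ((s.val.map f).map fun t => X - C t).prod by
      rw [Multiset.map_map]; rfl, Multiset.prod_X_sub_C_coeff _ (by simpa using hk)]
    simp [Finset.esymm_map_val]
  have heval := Polynomial.eval_eq_sum_range' (p := ∏ i ∈ s, (X - C (f i)))
    (n := #s + 1) (by omega) x
  rw [hP] at heval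
  rw [heval, Finset.mul_sum]
  refine Finset.sum_congr rfl fun k hk => ?_
  have hk' : k ≤ #s := by simpa [Nat.lt_succ_iff] using Finset.mem_range.mp hk
  rw [hcoeff k hk']
  have : (-1 : ℝ) ^ (#s) = (-1) ^ k * (-1) ^ (#s - k) := by
    rw [← pow_add]; congr 1; omega
  rw [this]; ring_nf; rw [mul_comm (#s - k) 2, pow_mul]; norm_num

end aux

/-- The inverse of the scaled Vandermonde matrix `V j ℓ = τ ℓ ^ (j+1)`
(1-based rows): its `(t,T)` entry is
`(-1)^(T-1) * (τ t * ∏_{ℓ ≠ t} (τ ℓ - τ t))⁻¹ * e_{L-T}(τ with τ t omitted)`,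
where indices `t T : Fin L` are 0-based, so the 1-based `T` is `T+1`. -/
theorem stmt_1 (L : ℕ) (τ : Fin L → ℝ) (hdist : Function.Injective τ)
    (hne : ∀ ℓ, τ ℓ ≠ 0)
    (V : Matrix (Fin L) (Fin L) ℝ)
    (hV : ∀ j ℓ, V j ℓ = τ ℓ ^ ((j : ℕ) + 1)) :
    ∀ t T : Fin L,
      V⁻¹ t T =
        (-1 : ℝ) ^ (T : ℕ) *
          (τ t * ∏ ℓ ∈ Finset.univ.erase t, (τ ℓ - τ t))⁻¹ *
          ∑ S ∈ (Finset.univ.erase t).powersetCard (L - 1 - (T : ℕ)),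
            ∏ ℓ ∈ S, τ ℓ := by
  set W : Matrix (Fin L) (Fin L) ℝ := fun t T =>
    (-1 : ℝ) ^ (T : ℕ) *
      (τ t * ∏ ℓ ∈ Finset.univ.erase t, (τ ℓ - τ t))⁻¹ *
      ∑ S ∈ (Finset.univ.erase t).powersetCard (L - 1 - (T : ℕ)),
        ∏ ℓ ∈ S, τ ℓ with hW
  have hcard : ∀ t : Fin L, #(Finset.univ.erase t) = L - 1 := by
    intro t
    rw [Finset.card_erase_of_mem (Finset.mem_univ t), Finset.card_univ, Fintype.card_fin]
  have hc : ∀ t : Fin L, τ t * ∏ ℓ ∈ Finset.univ.erase t, (τ ℓ - τ t) ≠ 0 := by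
    intro t
    refine mul_ne_zero (hne t) (Finset.prod_ne_zero_iff.mpr fun ℓ hℓ => ?_)
    have : ℓ ≠ t := Finset.ne_of_mem_erase hℓ
    exact sub_ne_zero_of_ne (fun h => this (hdist h))
  have hWV : W * V = 1 := by
    ext t s
    rw [Matrix.mul_apply, Matrix.one_apply]
    have hL : 0 < L := t.pos
    have hsum : ∑ T : Fin L, W t T * V T s
        = (τ t * ∏ ℓ ∈ Finset.univ.erase t, (τ ℓ - τ t))⁻¹ * τ s *
          ∑ k ∈ Finset.range L,
            (-1 : ℝ) ^ k *
              (∑ S ∈ (Finset.univ.erase t).powersetCard (L - 1 - k), ∏ ℓ ∈ S, τ ℓ) *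
              τ s ^ k := by
      rw [Finset.mul_sum, ← Fin.sum_univ_eq_sum_range (fun k =>
        (τ t * ∏ ℓ ∈ Finset.univ.erase t, (τ ℓ - τ t))⁻¹ * τ s *
          (((-1 : ℝ) ^ k *
            ∑ S ∈ (Finset.univ.erase t).powersetCard (L - 1 - k), ∏ ℓ ∈ S, τ ℓ) *
            τ s ^ k)) L]
      refine Finset.sum_congr rfl fun T _ => ?_
      rw [hW]
      simp only [hV]
      rw [pow_succ]
      ring
    rw [hsum]
    have hkey := stmt_1_key (Finset.univ.erase t) τ (τ s)
    rw [hcard t] at hkey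
    rw [show L - 1 + 1 = L by omega] at hkey
    rw [hkey]
    by_cases hst : t = s
    · subst hst
      simp only [if_pos rfl]
      have hprod : ∏ ℓ ∈ Finset.univ.erase t, (τ t - τ ℓ)
          = (-1 : ℝ) ^ (L - 1) * ∏ ℓ ∈ Finset.univ.erase t, (τ ℓ - τ t) := by
        rw [← hcard t, ← Finset.prod_const, ← Finset.prod_mul_distrib]
        exact Finset.prod_congr rfl fun ℓ _ => by ring
      rw [hprod]
      have hsq : ((-1 : ℝ)) ^ (L - 1) * (-1) ^ (L - 1) = 1 := by
        rw [← pow_add, ← two_mul, pow_mul]; norm_num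
      have hrw : (τ t * ∏ ℓ ∈ Finset.univ.erase t, (τ ℓ - τ t))⁻¹ * τ t *
          ((-1 : ℝ) ^ (L - 1) *
            ((-1) ^ (L - 1) * ∏ ℓ ∈ Finset.univ.erase t, (τ ℓ - τ t)))
          = ((-1 : ℝ) ^ (L - 1) * (-1) ^ (L - 1)) *
            ((τ t * ∏ ℓ ∈ Finset.univ.erase t, (τ ℓ - τ t))⁻¹ *
              (τ t * ∏ ℓ ∈ Finset.univ.erase t, (τ ℓ - τ t))) := by ring
      rw [hrw, hsq, inv_mul_cancel₀ (hc t), one_mul]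
      simp
    · rw [if_neg hst]
      have hs : s ∈ Finset.univ.erase t := Finset.mem_erase.mpr ⟨fun h => hst h.symm, Finset.mem_univ s⟩
      have h0 : ∏ i ∈ Finset.univ.erase t, (τ s - τ i) = 0 :=
        Finset.prod_eq_zero hs (show τ s - τ s = 0 by ring)
      rw [h0]
      ring
  intro t T
  rw [Matrix.inv_eq_left_inv hWV]
end

section
/- Let m ≥ 3, θ > 0, and let H ≥ 2. For pairwise-distinct-coordinate weight, one has ∑_{h ∈ {1,…,H}^m, coordinates not all equal} max_{t ≤ m} ∏_{ℓ ≤ m, ℓ ≠ t, h_ℓ ≠ h_t} |h_ℓ − h_t|^{−1/m} ≪ H^{(m−1) + 1/m} (log H)^{(m−2)/m}, where the implied constant depends only on m. -/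
/-!
Bound the maximum over the pivot `t` by the sum over `t`. For a fixed pivot, grouping the tuples
by the value `b = h t` makes the sum factorize into `(∑ a, w(a, b)) ^ (m - 1)`, where
`w(a, b) = |a - b| ^ (-1/m)` (and `1` for `a = b`). Each row sum is at most
`1 + 2 ∑_{d ≤ H} d ^ (-1/m) ≪ H ^ (1 - 1/m)`, so the total is `≪ m · H · H ^ ((1 - 1/m)(m - 1))`,
which is `H ^ (m - 1 + 1/m)`; the logarithmic factor is `≥ (log 2) ^ ((m - 2)/m)` and goes into
the constant.
-/

open Finset

theorem mul_rpow_sub_one_le_rpow_sub_rpow {x β : ℝ} (hx : 1 ≤ x) (hβ0 : 0 ≤ β) (hβ1 : β ≤ 1) :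
    β * x ^ (β - 1) ≤ x ^ β - (x - 1) ^ β := by
  have hx0 : 0 < x := by linarith
  have bernoulli : (1 + -x⁻¹) ^ β ≤ 1 + β * -x⁻¹ :=
    rpow_one_add_le_one_add_mul_self (by linarith [inv_le_one_of_one_le₀ hx]) hβ0 hβ1
  have hsplit : (x - 1) ^ β = x ^ β * (1 + -x⁻¹) ^ β := by
    rw [← Real.mul_rpow hx0.le (by linarith [inv_le_one_of_one_le₀ hx])]
    congr 1
    field_simp; ring
  have hpow : x ^ (β - 1) = x ^ β * x⁻¹ := by
    rw [Real.rpow_sub_one hx0.ne', div_eq_mul_inv]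
  rw [hsplit, hpow]
  nlinarith [Real.rpow_nonneg hx0.le β]

theorem sum_Icc_rpow_neg_le {α : ℝ} (hα0 : 0 ≤ α) (hα1 : α < 1) (H : ℕ) :
    ∑ d ∈ Icc 1 H, (d : ℝ) ^ (-α) ≤ (H : ℝ) ^ (1 - α) / (1 - α) := by
  have hβ : 0 < 1 - α := by linarith
  induction H with
  | zero => simp [Real.zero_rpow hβ.ne']
  | succ H ih =>
    rw [sum_Icc_succ_top (by omega)]
    have step := mul_rpow_sub_one_le_rpow_sub_rpow (x := H + 1) (by simp) hβ.le (by linarith)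
    rw [show 1 - α - 1 = -α by ring, add_sub_cancel_right] at step
    rw [le_div_iff₀ hβ] at ih ⊢
    push_cast
    linarith

theorem sum_comp_le_sum_of_injOn {α β M : Type*} [DecidableEq β] [AddCommMonoid M] [PartialOrder M]
    [IsOrderedAddMonoid M] {s : Finset α} {t : Finset β}
    {φ : α → β} (hφ : Set.MapsTo φ s t) (hinj : Set.InjOn φ s) {f : β → M}
    (hf : ∀ d ∈ t, 0 ≤ f d) : ∑ a ∈ s, f (φ a) ≤ ∑ d ∈ t, f d := by
  rw [← sum_image hinj]
  exact sum_le_sum_of_subset_of_nonneg (image_subset_iff.mpr hφ) fun d hd _ => hf d hd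

theorem sum_erase_Icc_abs_sub_le {H b : ℕ} (hb : b ≤ H) {f : ℝ → ℝ}
    (hf : ∀ d ∈ Icc 1 H, 0 ≤ f d) :
    ∑ a ∈ (Icc 1 H).erase b, f |(a : ℝ) - b| ≤ 2 * ∑ d ∈ Icc 1 H, f d := by
  have habs : ∀ a : ℕ, |(a : ℝ) - b| = ((a - b + (b - a) : ℕ) : ℝ) := by
    intro a
    rcases le_total a b with h | h
    · rw [Nat.sub_eq_zero_of_le h, zero_add, Nat.cast_sub h, abs_sub_comm,
        abs_of_nonneg (by simpa using h)]
    · rw [Nat.sub_eq_zero_of_le h, add_zero, Nat.cast_sub h, abs_of_nonneg (by simpa using h)]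
  -- `a ↦ (a < b, |a - b|)` injects `[1, H] \ {b}` into two copies of `[1, H]`
  calc _ = ∑ a ∈ (Icc 1 H).erase b, f ((a - b + (b - a) : ℕ) : ℝ) := by simp only [habs]
    _ ≤ ∑ p ∈ (univ : Finset Bool) ×ˢ Icc 1 H, f p.2 :=
        sum_comp_le_sum_of_injOn (φ := fun a => (decide (a < b), a - b + (b - a)))
          (f := fun p => f p.2)
          (fun a ha => by simp only [coe_erase, coe_Icc, Set.mem_sdiff, Set.mem_Icc,
            Set.mem_singleton_iff, coe_product, coe_univ, Set.mem_prod, Set.mem_univ,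
            true_and] at ha ⊢; omega)
          (fun a ha c hc h => by
            simp only [coe_erase, coe_Icc, Set.mem_sdiff, Set.mem_Icc, Set.mem_singleton_iff,
              Prod.mk.injEq, decide_eq_decide] at ha hc h
            omega)
          (fun p hp => hf p.2 (mem_product.mp hp).2)
    _ = 2 * ∑ d ∈ Icc 1 H, f d := by
        rw [sum_product, Fintype.sum_bool, two_mul]

theorem sum_piFinset_prod_erase {ι α R : Type*} [Fintype ι] [DecidableEq ι] [DecidableEq α]
    [CommSemiring R] (S : Finset α) (t : ι) (g : α → α → R) :
    ∑ h ∈ Fintype.piFinset (fun _ : ι => S), ∏ ℓ ∈ univ.erase t, g (h ℓ) (h t) =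
      ∑ b ∈ S, (∑ a ∈ S, g a b) ^ (Fintype.card ι - 1) := by
  -- the indicator of `h t = b` as `t`-th factor makes the sum over `h` a product of sums
  set F : α → ι → α → R := fun b ℓ a => if ℓ = t then (if a = b then 1 else 0) else g a b
  have hF : ∀ b (x : ι → α), ∏ ℓ, F b ℓ (x ℓ) =
      (if x t = b then 1 else 0) * ∏ ℓ ∈ univ.erase t, g (x ℓ) b := by
    intro b x
    rw [← mul_prod_erase univ _ (mem_univ t)]
    simp only [F, if_pos rfl]
    congr 1
    exact prod_congr rfl fun ℓ hℓ => if_neg (ne_of_mem_erase hℓ)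
  calc _ = ∑ h ∈ Fintype.piFinset (fun _ : ι => S), ∑ b ∈ S, ∏ ℓ, F b ℓ (h ℓ) := by
        refine sum_congr rfl fun h hh => ?_
        simp only [hF, ite_mul, one_mul, zero_mul]
        rw [sum_ite_eq, if_pos (Fintype.mem_piFinset.mp hh t)]
    _ = ∑ b ∈ S, ∏ ℓ, ∑ a ∈ S, F b ℓ a := by
        rw [sum_comm]
        simp only [prod_univ_sum]
    _ = _ := by
        refine sum_congr rfl fun b hb => ?_
        rw [← mul_prod_erase univ _ (mem_univ t)]
        simp only [F, if_pos rfl, sum_ite_eq', if_pos hb, one_mul]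
        rw [prod_congr rfl fun ℓ hℓ => sum_congr rfl fun a _ => if_neg (ne_of_mem_erase hℓ),
          prod_const, card_erase_of_mem (mem_univ t), card_univ]

-- Coordinates equal to the pivot are left out of the product, so they contribute `1`
-- (whereas `|0| ^ (-α) = 0` for the real power).
noncomputable def distWeight (α : ℝ) (a b : ℕ) : ℝ := if a = b then 1 else |(a : ℝ) - b| ^ (-α)

theorem distWeight_nonneg (α : ℝ) (a b : ℕ) : 0 ≤ distWeight α a b := by
  unfold distWeight; split_ifs <;> positivity

theorem prod_filter_ne_eq_prod_erase_distWeight {ι : Type*} [Fintype ι] [DecidableEq ι]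
    (α : ℝ) (h : ι → ℕ) (t : ι) :
    ∏ ℓ ∈ univ.filter (fun ℓ => ℓ ≠ t ∧ h ℓ ≠ h t), |(h ℓ : ℝ) - h t| ^ (-α) =
      ∏ ℓ ∈ univ.erase t, distWeight α (h ℓ) (h t) := by
  rw [← filter_ne' univ t, prod_filter, prod_filter]
  exact prod_congr rfl fun ℓ _ => by by_cases hℓ : h ℓ = h t <;> simp [hℓ, distWeight]

theorem sum_Icc_distWeight_le {α : ℝ} (hα0 : 0 ≤ α) (hα1 : α < 1) {H b : ℕ}
    (hb : b ∈ Icc 1 H) :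
    ∑ a ∈ Icc 1 H, distWeight α a b ≤ 1 + 2 * ((H : ℝ) ^ (1 - α) / (1 - α)) := by
  have hoff : ∀ a ∈ (Icc 1 H).erase b, distWeight α a b = |(a : ℝ) - b| ^ (-α) :=
    fun a ha => if_neg (ne_of_mem_erase ha)
  rw [← add_sum_erase _ _ hb, distWeight, if_pos rfl, sum_congr rfl hoff]
  gcongr 1 + ?_
  calc _ ≤ 2 * ∑ d ∈ Icc 1 H, (d : ℝ) ^ (-α) :=
        sum_erase_Icc_abs_sub_le (f := fun x => x ^ (-α)) (mem_Icc.mp hb).2 fun d _ => by positivity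
    _ ≤ _ := by gcongr; exact sum_Icc_rpow_neg_le hα0 hα1 H

theorem sum_piFinset_sup'_prod_le {ι : Type*} [Fintype ι] [DecidableEq ι] {α : ℝ}
    (hα0 : 0 ≤ α) (hα1 : α < 1) (hne : (univ : Finset ι).Nonempty) (H : ℕ) :
    ∑ h ∈ Fintype.piFinset (fun _ : ι => Icc 1 H), univ.sup' hne (fun t =>
        ∏ ℓ ∈ univ.filter (fun ℓ => ℓ ≠ t ∧ h ℓ ≠ h t), |(h ℓ : ℝ) - h t| ^ (-α)) ≤
      Fintype.card ι * (H * (1 + 2 * ((H : ℝ) ^ (1 - α) / (1 - α))) ^ (Fintype.card ι - 1)) := by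
  set K := 1 + 2 * ((H : ℝ) ^ (1 - α) / (1 - α))
  calc _ ≤ ∑ h ∈ Fintype.piFinset (fun _ : ι => Icc 1 H), ∑ t,
        ∏ ℓ ∈ univ.erase t, distWeight α (h ℓ) (h t) := by
        refine sum_le_sum fun h _ => sup'_le _ _ fun t _ => ?_
        rw [prod_filter_ne_eq_prod_erase_distWeight]
        exact single_le_sum (f := fun t => ∏ ℓ ∈ univ.erase t, distWeight α (h ℓ) (h t))
          (fun _ _ => prod_nonneg fun _ _ => distWeight_nonneg _ _ _) (mem_univ t)
    _ = ∑ t : ι, ∑ b ∈ Icc 1 H, (∑ a ∈ Icc 1 H, distWeight α a b) ^ (Fintype.card ι - 1) := by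
        rw [sum_comm]
        exact sum_congr rfl fun t _ => sum_piFinset_prod_erase _ t _
    _ ≤ ∑ _t : ι, ∑ _b ∈ Icc 1 H, K ^ (Fintype.card ι - 1) := by
        gcongr with t _ b hb
        · exact sum_nonneg fun a _ => distWeight_nonneg _ _ _
        · exact sum_Icc_distWeight_le hα0 hα1 hb
    _ = _ := by simp

theorem mul_one_add_two_mul_rpow_div_pow_le {m : ℕ} (hm : 2 ≤ m) {x : ℝ} (hx : 1 ≤ x) :
    x * (1 + 2 * (x ^ (1 - 1 / (m : ℝ)) / (1 - 1 / m))) ^ (m - 1) ≤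
      5 ^ (m - 1) * x ^ ((m : ℝ) - 1 + 1 / m) := by
  set β := 1 - 1 / (m : ℝ)
  have hm' : (2 : ℝ) ≤ m := by exact_mod_cast hm
  have hβ : 1 / 2 ≤ β := by
    have : 1 / (m : ℝ) ≤ 1 / 2 := one_div_le_one_div_of_le two_pos hm'
    simp only [β]; linarith
  have hxβ : 1 ≤ x ^ β := Real.one_le_rpow hx (by linarith)
  have hbase : 1 + 2 * (x ^ β / β) ≤ 5 * x ^ β := by
    have : x ^ β / β ≤ 2 * x ^ β := by
      rw [div_le_iff₀ (by linarith)]; nlinarith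
    linarith
  have hexp : (m : ℝ) - 1 + 1 / m = 1 + β * (m - 1 : ℕ) := by
    rw [Nat.cast_sub (by omega), Nat.cast_one]
    simp only [β]; field_simp; ring
  calc _ ≤ x * (5 * x ^ β) ^ (m - 1) := by gcongr
    _ = _ := by
      rw [hexp, Real.rpow_add (by linarith), Real.rpow_one, Real.rpow_mul (by linarith),
        Real.rpow_natCast, mul_pow]
      ring

theorem stmt_10 (m : ℕ) (hm : 3 ≤ m) :
    ∃ C : ℝ, 0 < C ∧
      ∀ H : ℕ, 2 ≤ H →
        ∑ h ∈ (Fintype.piFinset fun _ : Fin m => Finset.Icc 1 H).filter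
            (fun h => ¬ ∀ i j : Fin m, h i = h j),
          (Finset.univ.sup' ⟨⟨0, by omega⟩, Finset.mem_univ _⟩ fun t =>
            ∏ ℓ ∈ Finset.univ.filter (fun ℓ : Fin m => ℓ ≠ t ∧ h ℓ ≠ h t),
              |(h ℓ : ℝ) - (h t : ℝ)| ^ (-(1 : ℝ) / m)) ≤
          C * (H : ℝ) ^ ((m : ℝ) - 1 + 1 / m) *
            Real.log H ^ (((m : ℝ) - 2) / m) := by
  set γ := ((m : ℝ) - 2) / m
  have hγ : 0 ≤ γ :=
    div_nonneg (sub_nonneg.mpr (by exact_mod_cast (by omega : 2 ≤ m))) (by positivity)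
  have hlog2 : 0 < Real.log 2 ^ γ := Real.rpow_pos_of_pos (Real.log_pos one_lt_two) γ
  refine ⟨m * 5 ^ (m - 1) / Real.log 2 ^ γ, by positivity, fun H hH => ?_⟩
  have hH : (2 : ℝ) ≤ H := by exact_mod_cast hH
  have hα1 : 1 / (m : ℝ) < 1 := by
    rw [div_lt_one (by positivity)]; exact_mod_cast (by omega : 1 < m)
  simp_rw [neg_div]
  have hne : (univ : Finset (Fin m)).Nonempty := ⟨⟨0, by omega⟩, mem_univ _⟩
  calc _ ≤ ∑ h ∈ Fintype.piFinset (fun _ : Fin m => Icc 1 H), univ.sup' hne (fun t =>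
          ∏ ℓ ∈ univ.filter (fun ℓ => ℓ ≠ t ∧ h ℓ ≠ h t), |(h ℓ : ℝ) - h t| ^ (-(1 / m : ℝ))) :=
        sum_le_sum_of_subset_of_nonneg (filter_subset _ _) fun h _ _ =>
          le_sup'_of_le _ (mem_univ hne.choose) (prod_nonneg fun _ _ => by positivity)
    _ ≤ m * (H * (1 + 2 * ((H : ℝ) ^ (1 - 1 / (m : ℝ)) / (1 - 1 / m))) ^ (m - 1)) := by
        simpa using sum_piFinset_sup'_prod_le (α := 1 / m) (by positivity) hα1 hne H
    _ ≤ m * 5 ^ (m - 1) * (H : ℝ) ^ ((m : ℝ) - 1 + 1 / m) := by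
        rw [mul_assoc]
        exact mul_le_mul_of_nonneg_left
          (mul_one_add_two_mul_rpow_div_pow_le (m := m) (x := H) (by omega) (by linarith))
          (by positivity)
    _ ≤ _ := by
        have hlog : Real.log 2 ^ γ ≤ Real.log H ^ γ :=
          Real.rpow_le_rpow (Real.log_pos one_lt_two).le (Real.log_le_log two_pos hH) hγ
        rw [div_mul_eq_mul_div, div_mul_eq_mul_div, le_div_iff₀ hlog2]
        gcongr
end

section
/- Let f ∈ C_c^∞(ℝ) with f ≥ 0, let y : ℕ → ℝ, N ≥ 1, and define S_N(s) = ∑_{n=1}^N ∑_{k ∈ ℤ} f(N(y(n) + k + s)). Then ∫₀¹ S_N(s)³ ds = (1/N) ∑_{n₁,n₂,n₃=1}^N ∑_{k₁,k₂ ∈ ℤ} F(N(y(n₁) − y(n₃) + k₁), N(y(n₂) − y(n₃) + k₂)), where F(x,y) = ∫_ℝ f(x+s) f(y+s) f(s) ds. -/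
open MeasureTheory intervalIntegral Finset

private lemma adj_sum (g : ℝ → ℝ) (hg : Continuous g) (a : ℤ) (n : ℕ) :
    (∑ i ∈ Finset.range n, ∫ u in ((a + (i : ℤ) : ℤ) : ℝ)..(((a + (i : ℤ) : ℤ) : ℝ) + 1), g u)
      = ∫ u in (a : ℝ)..((a : ℝ) + n), g u := by
  induction n with
  | zero => simp
  | succ n ih =>
    rw [Finset.sum_range_succ, ih]
    have h1 : IntervalIntegrable g volume (a : ℝ) ((a : ℝ) + n) := hg.intervalIntegrable _ _
    have h2 : IntervalIntegrable g volume ((a : ℝ) + n) (((a : ℝ) + n) + 1) :=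
      hg.intervalIntegrable _ _
    have hadd := intervalIntegral.integral_add_adjacent_intervals h1 h2
    have hc1 : ((a + (n : ℤ) : ℤ) : ℝ) = (a : ℝ) + n := by push_cast; ring
    have hc2 : (a : ℝ) + ((n : ℕ) + 1 : ℕ) = ((a : ℝ) + n) + 1 := by push_cast; ring
    rw [hc1, hc2, hadd]

private lemma periodize (g : ℝ → ℝ) (hg : Continuous g) (A : ℝ)
    (hA : ∀ x : ℝ, A < |x| → g x = 0) :
    ∑' m : ℤ, (∫ u in (m : ℝ)..((m : ℝ) + 1), g u) = ∫ u, g u := by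
  set n : ℕ := ⌈A⌉₊ + 1 with hn
  have hAn : A < n := by
    have := Nat.le_ceil A
    have : A ≤ (⌈A⌉₊ : ℝ) := this
    rw [hn]; push_cast; linarith
  have hout : ∀ m : ℤ,
      m ∉ Finset.image (fun i : ℕ => -(n : ℤ) + i) (Finset.range (2 * n + 1)) →
      (∫ u in (m : ℝ)..((m : ℝ) + 1), g u) = 0 := by
    intro m hm
    have hrange : m < -(n : ℤ) ∨ (n : ℤ) < m := by
      by_contra h
      push_neg at h
      exact hm (Finset.mem_image.2 ⟨(m + n).toNat, Finset.mem_range.2 (by omega), by omega⟩)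
    have hz : ∀ u ∈ Set.uIcc (m : ℝ) ((m : ℝ) + 1), g u = (fun _ : ℝ => (0:ℝ)) u := by
      intro u hu
      rw [Set.uIcc_of_le (by linarith : (m : ℝ) ≤ (m : ℝ) + 1)] at hu
      rcases hrange with h | h
      · have hm1 : (m : ℝ) + 1 ≤ -(n : ℝ) := by exact_mod_cast (by omega : m + 1 ≤ -(n : ℤ))
        exact hA u (lt_abs.2 (Or.inr (by linarith [hu.2])))
      · have hm1 : (n : ℝ) + 1 ≤ (m : ℝ) := by exact_mod_cast (by omega : (n : ℤ) + 1 ≤ m)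
        exact hA u (lt_abs.2 (Or.inl (by linarith [hu.1])))
    rw [intervalIntegral.integral_congr hz]
    simp
  rw [tsum_eq_sum hout, Finset.sum_image (by intro a _ b _ h; have h' : -(n:ℤ) + a = -(n:ℤ) + b := h; omega),
    adj_sum g hg (-(n : ℤ)) (2 * n + 1)]
  have hc1 : ((-(n : ℤ) : ℤ) : ℝ) = -(n : ℝ) := by push_cast; ring
  have hc2 : (-(n : ℝ)) + ((2 * n + 1 : ℕ) : ℝ) = (n : ℝ) + 1 := by push_cast; ring
  rw [hc1, hc2, intervalIntegral.integral_of_le (by linarith [Nat.cast_nonneg (α := ℝ) n])]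
  apply setIntegral_eq_integral_of_forall_compl_eq_zero
  intro x hx
  simp only [Set.mem_Ioc, not_and_or, not_lt, not_le] at hx
  rcases hx with h | h
  · exact hA x (lt_abs.2 (Or.inr (by linarith)))
  · exact hA x (lt_abs.2 (Or.inl (by linarith)))

private lemma intcalc (f : ℝ → ℝ) (c : ℝ) (hc : 0 < c) (y1 y2 y3 j1 j2 : ℝ) :
    (∫ u : ℝ, f (c * (y1 + j1 + u)) * f (c * (y2 + j2 + u)) * f (c * (y3 + u)))
      = (1 / c) * ∫ t : ℝ,
          f (c * (y1 - y3 + j1) + t) * f (c * (y2 - y3 + j2) + t) * f t := by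
  set g : ℝ → ℝ := fun x => f (c * (y1 + j1) + x) * f (c * (y2 + j2) + x) * f (c * y3 + x)
    with hgdef
  have h1 : (∫ u : ℝ, f (c * (y1 + j1 + u)) * f (c * (y2 + j2 + u)) * f (c * (y3 + u)))
      = ∫ u : ℝ, g (c * u) := by
    congr 1
    funext u
    simp only [hgdef]
    rw [show c * (y1 + j1 + u) = c * (y1 + j1) + c * u by ring,
      show c * (y2 + j2 + u) = c * (y2 + j2) + c * u by ring,
      show c * (y3 + u) = c * y3 + c * u by ring]
  rw [h1, MeasureTheory.Measure.integral_comp_mul_left g c]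
  have h2 : (∫ x : ℝ, g x) = ∫ t : ℝ, g (t - c * y3) :=
    (MeasureTheory.integral_sub_right_eq_self g (c * y3)).symm
  have h3 : ∀ t : ℝ, g (t - c * y3)
      = f (c * (y1 - y3 + j1) + t) * f (c * (y2 - y3 + j2) + t) * f t := by
    intro t
    simp only [hgdef]
    rw [show c * (y1 + j1) + (t - c * y3) = c * (y1 - y3 + j1) + t by ring,
      show c * (y2 + j2) + (t - c * y3) = c * (y2 - y3 + j2) + t by ring,
      show c * y3 + (t - c * y3) = t by ring]
  rw [h2]
  simp only [h3, smul_eq_mul, abs_of_pos (inv_pos.2 hc), one_div]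

private lemma key (f : ℝ → ℝ) (hfc : Continuous f) (R : ℝ)
    (hR : ∀ x : ℝ, R < |x| → f x = 0) (c : ℝ) (hc : 1 ≤ c)
    (F : ℝ → ℝ → ℝ) (hF : ∀ x z : ℝ, F x z = ∫ s : ℝ, f (x + s) * f (z + s) * f s)
    (y1 y2 y3 : ℝ) (K : Finset ℤ)
    (h1 : ∀ k : ℤ, k ∉ K → ∀ s ∈ Set.Icc (0:ℝ) 1, f (c * (y1 + k + s)) = 0)
    (h2 : ∀ k : ℤ, k ∉ K → ∀ s ∈ Set.Icc (0:ℝ) 1, f (c * (y2 + k + s)) = 0)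
    (h3 : ∀ k : ℤ, k ∉ K → ∀ s ∈ Set.Icc (0:ℝ) 1, f (c * (y3 + k + s)) = 0) :
    (∑ k1 ∈ K, ∑ k2 ∈ K, ∑ k3 ∈ K, ∫ s in (0:ℝ)..1,
        f (c * (y1 + k1 + s)) * f (c * (y2 + k2 + s)) * f (c * (y3 + k3 + s)))
      = (1 / c) * ∑' k : ℤ × ℤ, F (c * (y1 - y3 + k.1)) (c * (y2 - y3 + k.2)) := by
  have hc0 : (0:ℝ) < c := lt_of_lt_of_le one_pos hc
  have hfcv : ∀ x : ℝ, R < |x| → f (c * x) = 0 := by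
    intro x hx
    apply hR
    have : |c * x| = c * |x| := by rw [abs_mul, abs_of_pos hc0]
    nlinarith [abs_nonneg x]
  set J : ℤ × ℤ × ℤ → ℝ := fun k => ∫ s in (0:ℝ)..1,
      f (c * (y1 + k.1 + s)) * f (c * (y2 + k.2.1 + s)) * f (c * (y3 + k.2.2 + s)) with hJdef
  set G : (ℤ × ℤ) × ℤ → ℝ := fun p => ∫ u in ((p.2 : ℤ) : ℝ)..(((p.2 : ℤ) : ℝ) + 1),
      f (c * (y1 + p.1.1 + u)) * f (c * (y2 + p.1.2 + u)) * f (c * (y3 + u)) with hGdef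
  have hJzero : ∀ k : ℤ × ℤ × ℤ, k ∉ K ×ˢ K ×ˢ K → J k = 0 := by
    intro k hk
    simp only [Finset.mem_product, not_and_or] at hk
    have hz : ∀ s ∈ Set.uIcc (0:ℝ) 1,
        f (c * (y1 + k.1 + s)) * f (c * (y2 + k.2.1 + s)) * f (c * (y3 + k.2.2 + s))
          = (fun _ : ℝ => (0:ℝ)) s := by
      intro s hs
      rw [Set.uIcc_of_le zero_le_one] at hs
      rcases hk with h | h | h
      · rw [h1 k.1 h s hs]; ring
      · rw [h2 k.2.1 h s hs]; ring
      · rw [h3 k.2.2 h s hs]; ring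
    simp only [hJdef]
    rw [intervalIntegral.integral_congr hz]
    simp
  set e : (ℤ × ℤ) × ℤ ≃ ℤ × ℤ × ℤ :=
    { toFun := fun p => (p.1.1 + p.2, p.1.2 + p.2, p.2)
      invFun := fun k => ((k.1 - k.2.2, k.2.1 - k.2.2), k.2.2)
      left_inv := fun p => by simp
      right_inv := fun k => by simp } with hedef
  have hJG : ∀ p : (ℤ × ℤ) × ℤ, J (e p) = G p := by
    rintro ⟨⟨j1, j2⟩, m⟩
    simp only [hJdef, hGdef, hedef, Equiv.coe_fn_mk]
    have hfun : (fun s => f (c * (y1 + ((j1 + m : ℤ) : ℝ) + s)) *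
        f (c * (y2 + ((j2 + m : ℤ) : ℝ) + s)) * f (c * (y3 + ((m : ℤ) : ℝ) + s)))
        = fun s => (fun u => f (c * (y1 + (j1 : ℝ) + u)) * f (c * (y2 + (j2 : ℝ) + u)) *
            f (c * (y3 + u))) ((m : ℝ) + s) := by
      funext s
      push_cast
      rw [show c * (y1 + ((j1:ℝ) + m) + s) = c * (y1 + j1 + ((m:ℝ) + s)) by ring,
        show c * (y2 + ((j2:ℝ) + m) + s) = c * (y2 + j2 + ((m:ℝ) + s)) by ring,
        show c * (y3 + (m:ℝ) + s) = c * (y3 + ((m:ℝ) + s)) by ring]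
    rw [hfun]
    simpa using intervalIntegral.integral_comp_add_left (a := (0:ℝ)) (b := (1:ℝ))
      (fun u => f (c * (y1 + (j1 : ℝ) + u)) * f (c * (y2 + (j2 : ℝ) + u)) * f (c * (y3 + u)))
      ((m : ℤ) : ℝ)
  set A1 : ℤ := ⌈2 * R + |y1| + |y3|⌉ + 1 with hA1
  set A2 : ℤ := ⌈2 * R + |y2| + |y3|⌉ + 1 with hA2
  set A3 : ℤ := ⌈R + |y3|⌉ + 1 with hA3
  have hA1r : 2 * R + |y1| + |y3| + 1 ≤ (A1 : ℝ) := by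
    rw [hA1]; push_cast; linarith [Int.le_ceil (2 * R + |y1| + |y3|)]
  have hA2r : 2 * R + |y2| + |y3| + 1 ≤ (A2 : ℝ) := by
    rw [hA2]; push_cast; linarith [Int.le_ceil (2 * R + |y2| + |y3|)]
  have hA3r : R + |y3| + 1 ≤ (A3 : ℝ) := by
    rw [hA3]; push_cast; linarith [Int.le_ceil (R + |y3|)]
  have hGzero : ∀ (j1 j2 m : ℤ),
      ¬(j1 ∈ Finset.Icc (-A1) A1 ∧ j2 ∈ Finset.Icc (-A2) A2 ∧ m ∈ Finset.Icc (-A3) A3) →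
      G ((j1, j2), m) = 0 := by
    intro j1 j2 m hnot
    have hz : ∀ u ∈ Set.uIcc ((m : ℤ) : ℝ) (((m : ℤ) : ℝ) + 1),
        f (c * (y1 + (j1 : ℝ) + u)) * f (c * (y2 + (j2 : ℝ) + u)) * f (c * (y3 + u))
          = (fun _ : ℝ => (0:ℝ)) u := by
      intro u hu
      rw [Set.uIcc_of_le (by linarith : ((m : ℤ) : ℝ) ≤ ((m : ℤ) : ℝ) + 1)] at hu
      by_cases hu3 : R < |y3 + u|
      · rw [hfcv _ hu3]; ring
      · push_neg at hu3
        have hy3u := abs_le.1 hu3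
        have hy3 := abs_le.1 (le_refl |y3|)
        have hau : |u| ≤ R + |y3| := by
          rw [abs_le]
          constructor <;> nlinarith [neg_abs_le y3, le_abs_self y3]
        have haur := abs_le.1 hau
        have hmem : m ∈ Finset.Icc (-A3) A3 := by
          rw [Finset.mem_Icc]
          constructor
          · have : (-(A3 : ℝ)) ≤ (m : ℝ) := by linarith [hu.2]
            exact_mod_cast this
          · have : (m : ℝ) ≤ (A3 : ℝ) := by linarith [hu.1]
            exact_mod_cast this
        have hj : j1 ∉ Finset.Icc (-A1) A1 ∨ j2 ∉ Finset.Icc (-A2) A2 := by tauto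
        rcases hj with hj | hj
        · have hj' : j1 < -A1 ∨ A1 < j1 := by
            rw [Finset.mem_Icc] at hj; omega
          have : R < |y1 + (j1 : ℝ) + u| := by
            rcases hj' with hj' | hj'
            · have : (j1 : ℝ) ≤ -(A1 : ℝ) - 1 := by exact_mod_cast (by omega : j1 ≤ -A1 - 1)
              refine lt_abs.2 (Or.inr ?_)
              have := le_abs_self y1
              linarith
            · have : (A1 : ℝ) + 1 ≤ (j1 : ℝ) := by exact_mod_cast (by omega : A1 + 1 ≤ j1)
              refine lt_abs.2 (Or.inl ?_)
              have := neg_abs_le y1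
              linarith
          rw [hfcv _ this]; ring
        · have hj' : j2 < -A2 ∨ A2 < j2 := by
            rw [Finset.mem_Icc] at hj; omega
          have : R < |y2 + (j2 : ℝ) + u| := by
            rcases hj' with hj' | hj'
            · have : (j2 : ℝ) ≤ -(A2 : ℝ) - 1 := by exact_mod_cast (by omega : j2 ≤ -A2 - 1)
              refine lt_abs.2 (Or.inr ?_)
              have := le_abs_self y2
              linarith
            · have : (A2 : ℝ) + 1 ≤ (j2 : ℝ) := by exact_mod_cast (by omega : A2 + 1 ≤ j2)
              refine lt_abs.2 (Or.inl ?_)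
              have := neg_abs_le y2
              linarith
          rw [hfcv _ this]; ring
    simp only [hGdef]
    rw [intervalIntegral.integral_congr hz]
    simp
  have hGsum : Summable G := by
    apply summable_of_ne_finset_zero
      (s := (Finset.Icc (-A1) A1 ×ˢ Finset.Icc (-A2) A2) ×ˢ Finset.Icc (-A3) A3)
    rintro ⟨⟨j1, j2⟩, m⟩ hp
    apply hGzero
    simp only [Finset.mem_product] at hp
    tauto
  have hGfib : ∀ a : ℤ × ℤ, Summable fun m => G (a, m) := by
    intro a
    apply summable_of_ne_finset_zero (s := Finset.Icc (-A3) A3)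
    intro m hm
    have := hGzero a.1 a.2 m (by tauto)
    simpa using this
  calc
    (∑ k1 ∈ K, ∑ k2 ∈ K, ∑ k3 ∈ K, ∫ s in (0:ℝ)..1,
        f (c * (y1 + k1 + s)) * f (c * (y2 + k2 + s)) * f (c * (y3 + k3 + s)))
        = ∑ k ∈ K ×ˢ K ×ˢ K, J k := by
          simp only [Finset.sum_product, hJdef]
    _ = ∑' k : ℤ × ℤ × ℤ, J k := (tsum_eq_sum hJzero).symm
    _ = ∑' p : (ℤ × ℤ) × ℤ, J (e p) := (e.tsum_eq J).symm
    _ = ∑' p : (ℤ × ℤ) × ℤ, G p := tsum_congr hJG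
    _ = ∑' a : ℤ × ℤ, ∑' m : ℤ, G (a, m) := Summable.tsum_prod' hGsum hGfib
    _ = ∑' a : ℤ × ℤ, (1 / c) * F (c * (y1 - y3 + a.1)) (c * (y2 - y3 + a.2)) := by
          refine tsum_congr fun a => ?_
          have hcont : Continuous fun u : ℝ =>
              f (c * (y1 + (a.1 : ℝ) + u)) * f (c * (y2 + (a.2 : ℝ) + u)) * f (c * (y3 + u)) := by
            have hin : ∀ z : ℝ, Continuous fun u : ℝ => c * (z + u) :=
              fun z => continuous_const.mul (continuous_const.add continuous_id)
            exact ((hfc.comp (hin _)).mul (hfc.comp (hin _))).mul (hfc.comp (hin _))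
          have hvan : ∀ u : ℝ, R + |y3| < |u| →
              f (c * (y1 + (a.1 : ℝ) + u)) * f (c * (y2 + (a.2 : ℝ) + u)) * f (c * (y3 + u))
                = 0 := by
            intro u hu
            have : R < |y3 + u| := by
              rcases lt_abs.1 hu with h | h
              · refine lt_abs.2 (Or.inl ?_); have := neg_abs_le y3; linarith
              · refine lt_abs.2 (Or.inr ?_); have := le_abs_self y3; linarith
            rw [hfcv _ this]; ring
          have hper := periodize _ hcont (R + |y3|) hvan
          have hG : (∑' m : ℤ, G (a, m)) = ∑' m : ℤ, ∫ u in ((m : ℤ) : ℝ)..(((m : ℤ) : ℝ) + 1),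
              f (c * (y1 + (a.1 : ℝ) + u)) * f (c * (y2 + (a.2 : ℝ) + u)) * f (c * (y3 + u)) := by
            refine tsum_congr fun m => ?_
            simp [hGdef]
          rw [hG, hper, intcalc f c hc0 y1 y2 y3 a.1 a.2, hF]
    _ = (1 / c) * ∑' k : ℤ × ℤ, F (c * (y1 - y3 + k.1)) (c * (y2 - y3 + k.2)) := tsum_mul_left

theorem stmt_18 (f : ℝ → ℝ) (hf : ContDiff ℝ (⊤ : ℕ∞) f) (hsupp : HasCompactSupport f)
    (hpos : ∀ x, 0 ≤ f x) (y : ℕ → ℝ) (N : ℕ) (hN : 1 ≤ N)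
    (F : ℝ → ℝ → ℝ)
    (hF : ∀ x z : ℝ, F x z = ∫ s : ℝ, f (x + s) * f (z + s) * f s) :
    ∫ s in (0:ℝ)..1,
        (∑ n ∈ Finset.Icc 1 N, ∑' k : ℤ, f (N * (y n + k + s))) ^ 3
      = (1 / N) *
          ∑ n₁ ∈ Finset.Icc 1 N, ∑ n₂ ∈ Finset.Icc 1 N, ∑ n₃ ∈ Finset.Icc 1 N,
            ∑' k : ℤ × ℤ,
              F (N * (y n₁ - y n₃ + k.1)) (N * (y n₂ - y n₃ + k.2)) := by
  have hfc : Continuous f := hf.continuous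
  have hc : (1:ℝ) ≤ (N:ℝ) := by exact_mod_cast hN
  have hc0 : (0:ℝ) < (N:ℝ) := by linarith
  obtain ⟨R0, hR0⟩ := hsupp.isBounded.subset_closedBall 0
  set R : ℝ := max R0 0 with hRdef
  have hR : ∀ x : ℝ, R < |x| → f x = 0 := by
    intro x hx
    apply image_eq_zero_of_notMem_tsupport
    intro hmem
    have := hR0 hmem
    rw [Metric.mem_closedBall, Real.dist_eq, sub_zero] at this
    have : |x| ≤ R := le_trans this (le_max_left _ _)
    linarith
  have hR0' : 0 ≤ R := le_max_right _ _
  have hfcv : ∀ x : ℝ, R < |x| → f ((N:ℝ) * x) = 0 := by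
    intro x hx
    apply hR
    have : |(N:ℝ) * x| = (N:ℝ) * |x| := by rw [abs_mul, abs_of_pos hc0]
    nlinarith [abs_nonneg x]
  set I : Finset ℕ := Finset.Icc 1 N with hIdef
  set B : ℝ := ∑ n ∈ I, |y n| with hBdef
  have hB : ∀ n ∈ I, |y n| ≤ B := fun n hn =>
    Finset.single_le_sum (f := fun i => |y i|) (fun i _ => abs_nonneg _) hn
  have hBnn : 0 ≤ B := Finset.sum_nonneg fun i _ => abs_nonneg _
  set MK : ℤ := ⌈R + B⌉ + 1 with hMKdef
  have hMKr : R + B + 1 ≤ (MK : ℝ) := by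
    rw [hMKdef]; push_cast; linarith [Int.le_ceil (R + B)]
  set K : Finset ℤ := Finset.Icc (-MK) MK with hKdef
  have hK : ∀ n ∈ I, ∀ k : ℤ, k ∉ K → ∀ s ∈ Set.Icc (0:ℝ) 1,
      f ((N:ℝ) * (y n + (k:ℝ) + s)) = 0 := by
    intro n hn k hk s hs
    apply hfcv
    have hk' : k < -MK ∨ MK < k := by
      rw [hKdef, Finset.mem_Icc] at hk; omega
    have hyn := hB n hn
    rcases hk' with h | h
    · have : (k : ℝ) ≤ -(MK : ℝ) - 1 := by exact_mod_cast (by omega : k ≤ -MK - 1)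
      refine lt_abs.2 (Or.inr ?_)
      have := le_abs_self (y n)
      have hs2 := hs.2
      linarith
    · have : (MK : ℝ) + 1 ≤ (k : ℝ) := by exact_mod_cast (by omega : MK + 1 ≤ k)
      refine lt_abs.2 (Or.inl ?_)
      have := neg_abs_le (y n)
      have hs1 := hs.1
      linarith
  have hsum : ∀ n ∈ I, ∀ s ∈ Set.Icc (0:ℝ) 1,
      (∑' k : ℤ, f ((N:ℝ) * (y n + (k:ℝ) + s))) = ∑ k ∈ K, f ((N:ℝ) * (y n + (k:ℝ) + s)) :=
    fun n hn s hs => tsum_eq_sum (fun k hk => hK n hn k hk s hs)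
  set a : ℕ × ℤ → ℝ → ℝ := fun p s => f ((N:ℝ) * (y p.1 + (p.2 : ℝ) + s)) with hadef
  set P : Finset (ℕ × ℤ) := I ×ˢ K with hPdef
  have hacont : ∀ p : ℕ × ℤ, Continuous (a p) := fun p =>
    hfc.comp (continuous_const.mul (continuous_const.add continuous_id))
  have e1 : (∫ s in (0:ℝ)..1, (∑ n ∈ I, ∑' k : ℤ, f ((N:ℝ) * (y n + (k:ℝ) + s))) ^ 3)
      = ∫ s in (0:ℝ)..1, (∑ p ∈ P, a p s) ^ 3 := by
    apply intervalIntegral.integral_congr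
    intro s hs
    rw [Set.uIcc_of_le zero_le_one] at hs
    show (∑ n ∈ I, ∑' k : ℤ, f ((N:ℝ) * (y n + (k:ℝ) + s))) ^ 3 = (∑ p ∈ P, a p s) ^ 3
    congr 1
    rw [hPdef, Finset.sum_product]
    exact Finset.sum_congr rfl fun n hn => hsum n hn s hs
  have e2 : ∀ s : ℝ, (∑ p ∈ P, a p s) ^ 3
      = ∑ p ∈ P, ∑ q ∈ P, ∑ r ∈ P, a p s * a q s * a r s := by
    intro s
    rw [pow_succ, pow_two, Finset.sum_mul_sum, Finset.sum_mul]
    refine Finset.sum_congr rfl fun p _ => ?_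
    rw [Finset.sum_mul]
    refine Finset.sum_congr rfl fun q _ => ?_
    rw [Finset.mul_sum]
  have e3 : (∫ s in (0:ℝ)..1, ∑ p ∈ P, ∑ q ∈ P, ∑ r ∈ P, a p s * a q s * a r s)
      = ∑ p ∈ P, ∑ q ∈ P, ∑ r ∈ P, ∫ s in (0:ℝ)..1, a p s * a q s * a r s := by
    rw [intervalIntegral.integral_finset_sum (f := fun p s => ∑ q ∈ P, ∑ r ∈ P, a p s * a q s * a r s) (fun p _ =>
      ((continuous_finset_sum _ fun q _ => continuous_finset_sum _ fun r _ =>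
        ((hacont p).mul (hacont q)).mul (hacont r)).intervalIntegrable _ _))]
    refine Finset.sum_congr rfl fun p _ => ?_
    rw [intervalIntegral.integral_finset_sum (f := fun q s => ∑ r ∈ P, a p s * a q s * a r s) (fun q _ =>
      ((continuous_finset_sum _ fun r _ =>
        ((hacont p).mul (hacont q)).mul (hacont r)).intervalIntegrable _ _))]
    refine Finset.sum_congr rfl fun q _ => ?_
    rw [intervalIntegral.integral_finset_sum (f := fun r s => a p s * a q s * a r s) (fun r _ =>
      ((((hacont p).mul (hacont q)).mul (hacont r)).intervalIntegrable _ _))]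
  have e4 : (∑ p ∈ P, ∑ q ∈ P, ∑ r ∈ P, ∫ s in (0:ℝ)..1, a p s * a q s * a r s)
      = ∑ n1 ∈ I, ∑ n2 ∈ I, ∑ n3 ∈ I, ∑ k1 ∈ K, ∑ k2 ∈ K, ∑ k3 ∈ K,
          ∫ s in (0:ℝ)..1, a (n1, k1) s * a (n2, k2) s * a (n3, k3) s := by
    simp only [hPdef, Finset.sum_product]
    refine Finset.sum_congr rfl fun n1 _ => ?_
    rw [Finset.sum_comm]
    refine Finset.sum_congr rfl fun n2 _ => ?_
    calc (∑ k1 ∈ K, ∑ k2 ∈ K, ∑ n3 ∈ I, ∑ k3 ∈ K,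
            ∫ s in (0:ℝ)..1, a (n1, k1) s * a (n2, k2) s * a (n3, k3) s)
        = ∑ k1 ∈ K, ∑ n3 ∈ I, ∑ k2 ∈ K, ∑ k3 ∈ K,
            ∫ s in (0:ℝ)..1, a (n1, k1) s * a (n2, k2) s * a (n3, k3) s :=
          Finset.sum_congr rfl fun k1 _ => Finset.sum_comm
      _ = ∑ n3 ∈ I, ∑ k1 ∈ K, ∑ k2 ∈ K, ∑ k3 ∈ K,
            ∫ s in (0:ℝ)..1, a (n1, k1) s * a (n2, k2) s * a (n3, k3) s :=
          Finset.sum_comm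
  have e5 : ∀ n1 ∈ I, ∀ n2 ∈ I, ∀ n3 ∈ I,
      (∑ k1 ∈ K, ∑ k2 ∈ K, ∑ k3 ∈ K,
          ∫ s in (0:ℝ)..1, a (n1, k1) s * a (n2, k2) s * a (n3, k3) s)
        = (1 / (N:ℝ)) * ∑' k : ℤ × ℤ,
            F ((N:ℝ) * (y n1 - y n3 + k.1)) ((N:ℝ) * (y n2 - y n3 + k.2)) := by
    intro n1 hn1 n2 hn2 n3 hn3
    exact key f hfc R hR (N:ℝ) hc F hF (y n1) (y n2) (y n3) K
      (fun k hk s hs => hK n1 hn1 k hk s hs)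
      (fun k hk s hs => hK n2 hn2 k hk s hs)
      (fun k hk s hs => hK n3 hn3 k hk s hs)
  calc
    (∫ s in (0:ℝ)..1, (∑ n ∈ Finset.Icc 1 N, ∑' k : ℤ, f ((N:ℝ) * (y n + (k:ℝ) + s))) ^ 3)
        = ∫ s in (0:ℝ)..1, (∑ p ∈ P, a p s) ^ 3 := e1
    _ = ∫ s in (0:ℝ)..1, ∑ p ∈ P, ∑ q ∈ P, ∑ r ∈ P, a p s * a q s * a r s := by
        refine intervalIntegral.integral_congr fun s _ => e2 s
    _ = ∑ p ∈ P, ∑ q ∈ P, ∑ r ∈ P, ∫ s in (0:ℝ)..1, a p s * a q s * a r s := e3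
    _ = ∑ n1 ∈ I, ∑ n2 ∈ I, ∑ n3 ∈ I, ∑ k1 ∈ K, ∑ k2 ∈ K, ∑ k3 ∈ K,
          ∫ s in (0:ℝ)..1, a (n1, k1) s * a (n2, k2) s * a (n3, k3) s := e4
    _ = ∑ n1 ∈ I, ∑ n2 ∈ I, ∑ n3 ∈ I, (1 / (N:ℝ)) * ∑' k : ℤ × ℤ,
          F ((N:ℝ) * (y n1 - y n3 + k.1)) ((N:ℝ) * (y n2 - y n3 + k.2)) := by
        refine Finset.sum_congr rfl fun n1 hn1 => ?_
        refine Finset.sum_congr rfl fun n2 hn2 => ?_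
        refine Finset.sum_congr rfl fun n3 hn3 => ?_
        exact e5 n1 hn1 n2 hn2 n3 hn3
    _ = (1 / (N:ℝ)) * ∑ n₁ ∈ Finset.Icc 1 N, ∑ n₂ ∈ Finset.Icc 1 N, ∑ n₃ ∈ Finset.Icc 1 N,
          ∑' k : ℤ × ℤ,
            F ((N:ℝ) * (y n₁ - y n₃ + k.1)) ((N:ℝ) * (y n₂ - y n₃ + k.2)) := by
        rw [Finset.mul_sum]
        refine Finset.sum_congr rfl fun n1 _ => ?_
        rw [Finset.mul_sum]
        refine Finset.sum_congr rfl fun n2 _ => ?_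
        rw [Finset.mul_sum]
end
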